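/- Let L be symmetric p.s.d., Q a well-mapped surjective coarsening with Π = Q^+Q, R ⊆ ℝ^N a subspace, S ∈ ℝ^{N×N}, and ε = sup_{x∈R, ‖x‖_L=1} ‖x − Πx‖_L. Assume both Π and S preserve ker(L), and S preserves R. Define S_c^MP = Q S Q^+. Then for all x ∈ R: ‖S x − Q^+ S_c^MP Q x‖_L ≤ ε ‖x‖_L (‖S‖_L + ‖ΠS‖_L), where ‖M‖_L = ‖L^{1/2} M L^{-1/2}‖. -/

import Mathlib

open Matrix Finset

noncomputable section

def IsMoorePenrose {m N : ℕ} (Q : Matrix (Fin m) (Fin N) ℝ)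
    (P : Matrix (Fin N) (Fin m) ℝ) : Prop :=
  Q * P * Q = Q ∧ P * Q * P = P ∧ (Q * P)ᵀ = Q * P ∧ (P * Q)ᵀ = P * Q

def WellMappedSurjective {m N : ℕ} (Q : Matrix (Fin m) (Fin N) ℝ) : Prop :=
  (∀ k i, 0 ≤ Q k i) ∧ (∀ i, ∃! k, Q k i ≠ 0) ∧ (∀ k, ∃ i, Q k i ≠ 0)

def lnorm {M : ℕ} (L : Matrix (Fin M) (Fin M) ℝ) (x : Fin M → ℝ) : ℝ :=
  Real.sqrt (x ⬝ᵥ (L *ᵥ x))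

def opNorm {M : ℕ} (B : Matrix (Fin M) (Fin M) ℝ) : ℝ :=
  ‖(Matrix.toEuclideanCLM (𝕜 := ℝ) (n := Fin M) B)‖

/-- The positive semidefinite square root of a positive semidefinite matrix
(the definition of `Matrix.PosSemidef.sqrt` in the older Mathlib, removed since). -/
def Matrix.PosSemidef.sqrt {n : Type*} [Fintype n] [DecidableEq n] {A : Matrix n n ℝ}
    (hA : A.PosSemidef) : Matrix n n ℝ :=
  hA.1.eigenvectorUnitary.1 * diagonal ((↑) ∘ (√·) ∘ hA.1.eigenvalues) *
    (star hA.1.eigenvectorUnitary : Matrix n n ℝ)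

/-!
Write `Π = Q⁺Q`. The error splits as `Sx − ΠSΠx = (I − Π)(Sx) + ΠS(x − Πx)`, and since `S`
preserves `R` the approximation bound applies to both `x` and `Sx`. The remaining factors
`‖Sx‖_L` and `‖ΠS(x − Πx)‖_L` are bounded by `L`-operator norms: for any `M` preserving `ker L`,
`√L M = (√L M √L⁺) √L`, because `√L⁺ √L = L⁺L` fixes every vector modulo `ker L` and `√L`
annihilates `ker L`. The identity `√L⁺ √L = L⁺L` holds because `L` and `L⁺` commute, so the square
roots multiply to `√(L⁺L)`, and `L⁺L` is an orthogonal projector, hence its own square root.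
-/

open scoped MatrixOrder ComplexOrder

namespace Matrix

section Sqrt

variable {n 𝕜 : Type*} [Fintype n] [DecidableEq n] [RCLike 𝕜]

theorem PosSemidef.sqrt_eq_cfcSqrt {A : Matrix n n ℝ} (hA : A.PosSemidef) :
    hA.sqrt = CFC.sqrt A := by
  rw [CFC.sqrt_eq_real_sqrt A hA.nonneg, cfcₙ_eq_cfc, hA.isHermitian.cfc_eq, IsHermitian.cfc,
    Unitary.conjStarAlgAut_apply]
  rfl

theorem cfcSqrt_isHermitian (A : Matrix n n 𝕜) : (CFC.sqrt A).IsHermitian :=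
  (nonneg_iff_posSemidef.mp (CFC.sqrt_nonneg A)).isHermitian

theorem commute_cfcSqrt_left {A B : Matrix n n 𝕜} (h : Commute A B) :
    Commute (CFC.sqrt A) B :=
  CFC.sqrt_eq_cfc (a := A) ▸ h.cfc_nnreal NNReal.sqrt

theorem PosSemidef.mul_of_commute {A B : Matrix n n 𝕜} (hA : A.PosSemidef) (hB : B.PosSemidef)
    (h : Commute A B) : (A * B).PosSemidef := by
  have hAB : A * B = (CFC.sqrt A)ᴴ * B * CFC.sqrt A := by
    rw [(cfcSqrt_isHermitian A).eq, mul_assoc, ← (commute_cfcSqrt_left h).eq, ← mul_assoc,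
      CFC.sqrt_mul_sqrt_self A hA.nonneg]
  rw [hAB]
  exact hB.conjTranspose_mul_mul_same _

theorem cfcSqrt_mul_cfcSqrt_of_commute {A B : Matrix n n 𝕜} (hA : A.PosSemidef)
    (hB : B.PosSemidef) (h : Commute A B) :
    CFC.sqrt A * CFC.sqrt B = CFC.sqrt (A * B) := by
  have hsqrt : Commute (CFC.sqrt A) (CFC.sqrt B) :=
    (commute_cfcSqrt_left (commute_cfcSqrt_left h).symm).symm
  refine (CFC.sqrt_unique ?_ ?_).symm
  · rw [mul_assoc, ← mul_assoc (CFC.sqrt B), ← hsqrt.eq, mul_assoc, ← mul_assoc,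
      CFC.sqrt_mul_sqrt_self A hA.nonneg, CFC.sqrt_mul_sqrt_self B hB.nonneg]
  · exact (PosSemidef.mul_of_commute (nonneg_iff_posSemidef.mp (CFC.sqrt_nonneg A))
      (nonneg_iff_posSemidef.mp (CFC.sqrt_nonneg B)) hsqrt).nonneg

theorem cfcSqrt_eq_self_of_isIdempotentElem {E : Matrix n n 𝕜} (hE : E.IsHermitian)
    (h : IsIdempotentElem E) : CFC.sqrt E = E := by
  refine CFC.sqrt_unique h ?_
  simpa only [hE.eq, h.eq] using (posSemidef_conjTranspose_mul_self E).nonneg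

theorem cfcSqrt_mulVec_eq_zero {A : Matrix n n 𝕜} (hA : A.PosSemidef) {v : n → 𝕜}
    (h : A *ᵥ v = 0) : CFC.sqrt A *ᵥ v = 0 := by
  rwa [← conjTranspose_mul_self_mulVec_eq_zero, (cfcSqrt_isHermitian A).eq,
    CFC.sqrt_mul_sqrt_self A hA.nonneg]

end Sqrt

theorem mulVec_sub_mulVec_coarse_eq {ι κ R : Type*} [Fintype ι] [Fintype κ] [CommRing R]
    (S : Matrix ι ι R) (Q : Matrix κ ι R) (P : Matrix ι κ R) (x : ι → R) :
    S *ᵥ x - P *ᵥ ((Q * S * P) *ᵥ (Q *ᵥ x)) =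
      (S *ᵥ x - (P * Q) *ᵥ (S *ᵥ x)) + ((P * Q) * S) *ᵥ (x - (P * Q) *ᵥ x) := by
  simp only [mulVec_sub, mulVec_mulVec, Matrix.mul_assoc]
  abel

end Matrix

section MoorePenrose

variable {m N : ℕ}

theorem IsMoorePenrose.isIdempotentElem_pinv_mul {Q : Matrix (Fin m) (Fin N) ℝ}
    {P : Matrix (Fin N) (Fin m) ℝ} (h : IsMoorePenrose Q P) : IsIdempotentElem (P * Q) := by
  rw [IsIdempotentElem, ← Matrix.mul_assoc, h.2.1]

theorem IsMoorePenrose.commute_of_isHermitian {L Lplus : Matrix (Fin N) (Fin N) ℝ}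
    (h : IsMoorePenrose L Lplus) (hL : L.IsHermitian) (hLplus : Lplus.IsHermitian) :
    Commute Lplus L :=
  calc Lplus * L = (Lplus * L)ᵀ := h.2.2.2.symm
    _ = L * Lplus := by rw [transpose_mul, ← conjTranspose_eq_transpose_of_trivial, hL.eq,
      ← conjTranspose_eq_transpose_of_trivial, hLplus.eq]

theorem IsMoorePenrose.cfcSqrt_pinv_mul_cfcSqrt {L Lplus : Matrix (Fin N) (Fin N) ℝ}
    (h : IsMoorePenrose L Lplus) (hL : L.PosSemidef) (hLplus : Lplus.PosSemidef) :
    CFC.sqrt Lplus * CFC.sqrt L = Lplus * L := by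
  rw [cfcSqrt_mul_cfcSqrt_of_commute hLplus hL (h.commute_of_isHermitian hL.isHermitian hLplus.isHermitian)]
  refine cfcSqrt_eq_self_of_isIdempotentElem ?_ h.isIdempotentElem_pinv_mul
  rw [IsHermitian, conjTranspose_eq_transpose_of_trivial]
  exact h.2.2.2

end MoorePenrose

section LNorm

variable {N : ℕ} {L : Matrix (Fin N) (Fin N) ℝ}

theorem lnorm_nonneg (x : Fin N → ℝ) : 0 ≤ lnorm L x :=
  Real.sqrt_nonneg _

theorem lnorm_eq_zero_of_le_mul_of_neg {x y : Fin N → ℝ} {ε : ℝ}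
    (h : lnorm L y ≤ ε * lnorm L x) (hε : ε < 0) : lnorm L x = 0 :=
  le_antisymm (nonpos_of_mul_nonneg_right ((lnorm_nonneg y).trans h) hε) (lnorm_nonneg x)

theorem lnorm_eq_norm_cfcSqrt_mulVec (hL : L.PosSemidef) (x : Fin N → ℝ) :
    lnorm L x = ‖WithLp.toLp 2 (CFC.sqrt L *ᵥ x)‖ := by
  have hquad : x ⬝ᵥ (L *ᵥ x) = (CFC.sqrt L *ᵥ x) ⬝ᵥ (CFC.sqrt L *ᵥ x) := by
    conv_lhs => rw [← CFC.sqrt_mul_sqrt_self L hL.nonneg]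
    rw [← mulVec_mulVec, dotProduct_mulVec,
      ← vecMul_transpose, ← conjTranspose_eq_transpose_of_trivial, (cfcSqrt_isHermitian L).eq]
  rw [lnorm, hquad, EuclideanSpace.norm_eq]
  simp [dotProduct, sq]

theorem lnorm_add_le (hL : L.PosSemidef) (x y : Fin N → ℝ) :
    lnorm L (x + y) ≤ lnorm L x + lnorm L y := by
  simp only [lnorm_eq_norm_cfcSqrt_mulVec hL, mulVec_add, WithLp.toLp_add]
  exact norm_add_le _ _

theorem lnorm_mulVec_le_opNorm {Lplus : Matrix (Fin N) (Fin N) ℝ} (hL : L.PosSemidef)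
    (hLplus : Lplus.PosSemidef) (hMP : IsMoorePenrose L Lplus) (M : Matrix (Fin N) (Fin N) ℝ)
    (hM : ∀ v, L *ᵥ v = 0 → L *ᵥ (M *ᵥ v) = 0) (x : Fin N → ℝ) :
    lnorm L (M *ᵥ x) ≤ opNorm (hL.sqrt * M * hLplus.sqrt) * lnorm L x := by
  rw [hL.sqrt_eq_cfcSqrt, hLplus.sqrt_eq_cfcSqrt]
  have hker : L *ᵥ ((Lplus * L) *ᵥ x - x) = 0 := by
    rw [mulVec_sub, mulVec_mulVec, ← mul_assoc, hMP.1, sub_self]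
  have hfactor : CFC.sqrt L *ᵥ (M *ᵥ x) =
      (CFC.sqrt L * M * CFC.sqrt Lplus) *ᵥ (CFC.sqrt L *ᵥ x) := by
    have h := cfcSqrt_mulVec_eq_zero hL (hM _ hker)
    rw [mulVec_sub, mulVec_sub, sub_eq_zero] at h
    rw [← h]
    simp only [mulVec_mulVec, Matrix.mul_assoc, hMP.cfcSqrt_pinv_mul_cfcSqrt hL hLplus]
  rw [lnorm_eq_norm_cfcSqrt_mulVec hL, lnorm_eq_norm_cfcSqrt_mulVec hL, hfactor,
    ← toEuclideanCLM_toLp]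
  exact ContinuousLinearMap.le_opNorm _ _

end LNorm

theorem stmt_8_general {m N : ℕ} (L S : Matrix (Fin N) (Fin N) ℝ) (hL : L.PosSemidef)
    (Lplus : Matrix (Fin N) (Fin N) ℝ) (hLplusMP : IsMoorePenrose L Lplus)
    (hLplus : Lplus.PosSemidef)
    (Q : Matrix (Fin m) (Fin N) ℝ) (P : Matrix (Fin N) (Fin m) ℝ)
    (R : Submodule ℝ (Fin N → ℝ)) (ε : ℝ)
    -- RSA property: `‖x − Πx‖_L ≤ ε ‖x‖_L` on `R`, with `Π = Q⁺Q = P * Q`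
    (hε : ∀ x ∈ R, lnorm L (x - (P * Q) *ᵥ x) ≤ ε * lnorm L x)
    -- `Π` and `S` preserve `ker L`
    (hkerProj : ∀ x : Fin N → ℝ, L *ᵥ x = 0 → L *ᵥ ((P * Q) *ᵥ x) = 0)
    (hkerS : ∀ x : Fin N → ℝ, L *ᵥ x = 0 → L *ᵥ (S *ᵥ x) = 0)
    -- `S` preserves `R`
    (hSR : ∀ x ∈ R, S *ᵥ x ∈ R) :
    ∀ x ∈ R,
      lnorm L (S *ᵥ x - P *ᵥ ((Q * S * P) *ᵥ (Q *ᵥ x)))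
        ≤ ε * lnorm L x *
          (opNorm (hL.sqrt * S * hLplus.sqrt) +
            opNorm (hL.sqrt * ((P * Q) * S) * hLplus.sqrt)) := by
  intro x hx
  have hkerPS : ∀ v, L *ᵥ v = 0 → L *ᵥ (((P * Q) * S) *ᵥ v) = 0 := fun v hv => by
    rw [← mulVec_mulVec]
    exact hkerProj _ (hkerS _ hv)
  have hSx := lnorm_mulVec_le_opNorm hL hLplus hLplusMP S hkerS x
  have hPSx := lnorm_mulVec_le_opNorm hL hLplus hLplusMP _ hkerPS (x - (P * Q) *ᵥ x)
  -- A negative `ε` forces `‖·‖_L` to vanish on `R`.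
  have hεSx : ε * lnorm L (S *ᵥ x) ≤ ε * (opNorm (hL.sqrt * S * hLplus.sqrt) * lnorm L x) := by
    rcases le_or_gt 0 ε with hε0 | hε0
    · exact mul_le_mul_of_nonneg_left hSx hε0
    · rw [lnorm_eq_zero_of_le_mul_of_neg (hε _ (hSR x hx)) hε0,
        lnorm_eq_zero_of_le_mul_of_neg (hε x hx) hε0]
      simp
  rw [mulVec_sub_mulVec_coarse_eq]
  calc _ ≤ lnorm L (S *ᵥ x - (P * Q) *ᵥ (S *ᵥ x)) +
          lnorm L (((P * Q) * S) *ᵥ (x - (P * Q) *ᵥ x)) := lnorm_add_le hL _ _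
    _ ≤ ε * lnorm L (S *ᵥ x) +
          opNorm (hL.sqrt * ((P * Q) * S) * hLplus.sqrt) * (ε * lnorm L x) :=
        add_le_add (hε _ (hSR x hx)) (hPSx.trans (mul_le_mul_of_nonneg_left (hε x hx)
          (norm_nonneg _)))
    _ ≤ ε * (opNorm (hL.sqrt * S * hLplus.sqrt) * lnorm L x) +
          opNorm (hL.sqrt * ((P * Q) * S) * hLplus.sqrt) * (ε * lnorm L x) :=
        add_le_add_left hεSx _
    _ = _ := by ring

theorem stmt_8 {m N : ℕ} (L S : Matrix (Fin N) (Fin N) ℝ) (hL : L.PosSemidef)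
    (Lplus : Matrix (Fin N) (Fin N) ℝ) (hLplusMP : IsMoorePenrose L Lplus)
    (hLplus : Lplus.PosSemidef)
    (Q : Matrix (Fin m) (Fin N) ℝ) (P : Matrix (Fin N) (Fin m) ℝ)
    (hQ : WellMappedSurjective Q) (hP : IsMoorePenrose Q P)
    (R : Submodule ℝ (Fin N → ℝ)) (ε : ℝ)
    -- RSA property: `‖x − Πx‖_L ≤ ε ‖x‖_L` on `R`, with `Π = Q⁺Q = P * Q`
    (hε : ∀ x ∈ R, lnorm L (x - (P * Q) *ᵥ x) ≤ ε * lnorm L x)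
    -- `Π` and `S` preserve `ker L`
    (hkerProj : ∀ x : Fin N → ℝ, L *ᵥ x = 0 → L *ᵥ ((P * Q) *ᵥ x) = 0)
    (hkerS : ∀ x : Fin N → ℝ, L *ᵥ x = 0 → L *ᵥ (S *ᵥ x) = 0)
    -- `S` preserves `R`
    (hSR : ∀ x ∈ R, S *ᵥ x ∈ R) :
    ∀ x ∈ R,
      lnorm L (S *ᵥ x - P *ᵥ ((Q * S * P) *ᵥ (Q *ᵥ x)))
        ≤ ε * lnorm L x *
          (opNorm (hL.sqrt * S * hLplus.sqrt) +
            opNorm (hL.sqrt * ((P * Q) * S) * hLplus.sqrt)) :=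
  stmt_8_general L S hL Lplus hLplusMP hLplus Q P R ε hε hkerProj hkerS hSR
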